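/- Let f : ℕ → ℕ be nondecreasing, unbounded, and recursively approximable from above, meaning there is a computable g : ℕ × ℕ → ℕ with g(n, s+1) ≤ g(n, s) for all n, s and lim_s g(n, s) = f(n) for each n. Then there exists a nonatomic Borel probability measure μ on 2^ℕ (i.e., μ({Z}) = 0 for every Z) such that C(μ↾n) ≤⁺ C(n) + f(n) and K(μ↾n) ≤⁺ K(n) + f(n). -/

import Mathlib

open MeasureTheory Filter

/-- Cantor space: the space of infinite binary sequences. -/
abbrev Cantor : Type := ℕ → Bool

/-- Finite binary strings. -/
abbrev BStr : Type := List Bool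

/-- The cylinder set of sequences extending the string `x`. -/
def cyl (x : BStr) : Set Cantor := {Z | ∀ i : Fin x.length, Z i.1 = x.get i}

/-- The string of the first `n` bits of `Z`. -/
def seg (Z : Cantor) (n : ℕ) : BStr := List.ofFn fun i : Fin n => Z i.1

/-- `lam` is the uniform (fair-coin product) measure: every cylinder `[x]`
has measure `2^{-|x|}`. -/
def IsUniform (lam : Measure Cantor) : Prop :=
  ∀ x : BStr, lam (cyl x) = (2 : ENNReal)⁻¹ ^ x.length

/-- `(G_m)` is a Martin-Löf test with respect to the measure `ρ`:
the sets `G_m` are uniformly effectively open and `ρ (G_m) ≤ 2^{-m}`. -/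
def IsMLTest (ρ : Measure Cantor) (G : ℕ → Set Cantor) : Prop :=
  (∃ σ : ℕ → ℕ → BStr, Computable₂ σ ∧ ∀ m, G m = ⋃ i, cyl (σ m i)) ∧
  ∀ m, ρ (G m) ≤ (2 : ENNReal)⁻¹ ^ m

/-- `μ` is Martin-Löf absolutely continuous in `ρ`: `inf_m μ(G_m) = 0`
for every `ρ`-Martin-Löf test `(G_m)`. -/
def MLAC (μ ρ : Measure Cantor) : Prop :=
  ∀ G : ℕ → Set Cantor, IsMLTest ρ G → ⨅ m, μ (G m) = 0

/-- `Z` is Martin-Löf random with respect to `lam`. -/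
def MLRandom (lam : Measure Cantor) (Z : Cantor) : Prop :=
  ∀ G : ℕ → Set Cantor, IsMLTest lam G → Z ∉ ⋂ m, G m

/-- `ρ` is a computable measure: `ρ [x]` is a computable real, uniformly in `x`. -/
def ComputableMeasure (ρ : Measure Cantor) : Prop :=
  ∃ q : BStr → ℕ → ℚ, Computable₂ q ∧
    ∀ x k, |(q x k : ℝ) - (ρ (cyl x)).toReal| ≤ (2 : ℝ)⁻¹ ^ k

/-- `U` is a universal plain machine. -/
def UniversalPlain (U : BStr →. BStr) : Prop :=
  Partrec U ∧ ∀ M : BStr →. BStr, Partrec M →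
    ∃ c : ℕ, ∀ p x, x ∈ M p → ∃ q : BStr, q.length ≤ p.length + c ∧ x ∈ U q

/-- The domain of `M` is an antichain under the prefix relation. -/
def PrefixFreeDom (M : BStr →. BStr) : Prop :=
  ∀ p q : BStr, (M p).Dom → (M q).Dom → p <+: q → p = q

/-- `U` is a universal prefix-free machine. -/
def UniversalPrefixFree (U : BStr →. BStr) : Prop :=
  Partrec U ∧ PrefixFreeDom U ∧
  ∀ M : BStr →. BStr, Partrec M → PrefixFreeDom M →
    ∃ c : ℕ, ∀ p x, x ∈ M p → ∃ q : BStr, q.length ≤ p.length + c ∧ x ∈ U q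

/-- Kolmogorov complexity of the string `x` with respect to the machine `U`:
the minimal length of a `U`-description of `x`. -/
noncomputable def cpx (U : BStr →. BStr) (x : BStr) : ℕ :=
  sInf {n | ∃ q : BStr, q.length = n ∧ x ∈ U q}

/-- A natural number `n` identified with the string `0^n`. -/
def numStr (n : ℕ) : BStr := List.replicate n false

/-- Complexity of the natural number `n` (i.e., of the string `0^n`). -/
noncomputable def cpxN (U : BStr →. BStr) (n : ℕ) : ℕ := cpx U (numStr n)

/-- The `μ`-average complexity of the strings of length `n`:
`Σ_{|x|=n} cpx(x) · μ[x]`. -/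
noncomputable def avgCpx (U : BStr →. BStr) (μ : Measure Cantor) (n : ℕ) : ℝ :=
  ∑ v : Fin n → Bool, (cpx U (List.ofFn v) : ℝ) * (μ (cyl (List.ofFn v))).toReal

/-- A measure `μ` is trivial for the complexity given by the machine `U`
(e.g. K-trivial when `U` is the universal prefix-free machine, C-trivial
when `U` is the universal plain machine). -/
def MeasTrivial (U : BStr →. BStr) (μ : Measure Cantor) : Prop :=
  ∃ c : ℝ, ∀ n : ℕ, avgCpx U μ n ≤ (cpxN U n : ℝ) + c

/-!
Choose positions `P 0 < P 1 < ⋯` with `2 (j + 1) ≤ f (P j)` and let `μ` put independent fair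
coins at these positions and `false` elsewhere; `μ` is nonatomic since there are infinitely many
positions. A string of length `n` charged by `μ` has only `h ≤ f n / 2` random bits `w`, so it
is described by `1^h 0 w q`, with `q` a shortest description of `n`, as soon as the positions
below `n` can be computed from `n`. Since `f` is only approximable from above, `P j` is put
after the stage `settle j` from which `g · s` reveals the least `p` with `2 (j + 1) ≤ f p`;
knowing `n > P j`, the decoder finds that stage again by a search below `n`.
-/

section Computability

variable {α σ : Type*} [Primcodable α] [Primcodable σ]

theorem Computable.list_map_range {F : α → ℕ → σ} (hF : Computable₂ F) :
    Computable₂ fun a n => (List.range n).map (F a) := by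
  have hstep : Computable₂ fun (x : α × ℕ) (q : ℕ × List σ) => q.2 ++ [F x.1 q.1] :=
    Computable.list_concat.comp (Computable.snd.comp .snd)
      (hF.comp (Computable.fst.comp .fst) (Computable.fst.comp .snd))
  refine (Computable.nat_rec .snd (.const []) hstep).to₂.of_eq fun ⟨a, n⟩ => ?_
  induction n with
  | zero => rfl
  | succ n ih =>
    simp only [List.range_succ, List.map_append, List.map_singleton] at ih ⊢
    rw [← ih]

theorem Computable.list_findIdx_range {p : α → ℕ → Bool} (hp : Computable₂ p) :
    Computable₂ fun a n => (List.range n).findIdx (p a) := by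
  have hfind : Primrec fun l : List Bool => l.findIdx id := Primrec.list_findIdx .id .snd
  refine (hfind.to_comp.comp (Computable.list_map_range hp)).to₂.of_eq fun ⟨a, n⟩ => ?_
  simp [List.findIdx_map]

end Computability

theorem Primrec.list_sum_nat : Primrec (List.sum : List ℕ → ℕ) :=
  (Primrec.list_foldr .id (.const 0) (Primrec.nat_add.comp (Primrec.fst.comp .snd)
    (Primrec.snd.comp .snd)).to₂).of_eq fun l => by induction l <;> simp_all

theorem List.findIdx_range_eq {q : ℕ → Bool} {m N : ℕ} (hm : m < N) (hq : q m)
    (hlt : ∀ p < m, q p = false) : (List.range N).findIdx q = m := by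
  rw [List.findIdx_eq (by simpa using hm)]
  simpa using ⟨hq, hlt⟩

theorem List.eq_false_of_lt_findIdx_range {q : ℕ → Bool} {p N : ℕ}
    (hp : p < (List.range N).findIdx q) : q p = false := by
  simpa using List.not_of_lt_findIdx (xs := List.range N) hp

theorem List.idxOf_map_range_of_injective {P : ℕ → ℕ} (hP : P.Injective) {h j : ℕ}
    (hj : j < h) : ((List.range h).map P).idxOf (P j) = j := by
  have := (List.nodup_range.map hP).idxOf_getElem j (by simpa using hj)
  simpa using this

noncomputable def numBelow (P : ℕ → ℕ) (n : ℕ) : ℕ := sInf {h | n ≤ P h}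

theorem lt_numBelow_iff {P : ℕ → ℕ} (hP : StrictMono P) {n j : ℕ} :
    j < numBelow P n ↔ P j < n := by
  constructor
  · intro hj
    simpa using Nat.notMem_of_lt_sInf hj
  · intro hj
    by_contra! hle
    have hmem : n ≤ P (numBelow P n) := Nat.sInf_mem (s := {h | n ≤ P h}) ⟨n, hP.id_le n⟩
    exact (hmem.trans (hP.monotone hle)).not_gt hj

section Cylinders

theorem length_seg (Z : Cantor) (n : ℕ) : (seg Z n).length = n := List.length_ofFn

theorem mem_cyl_iff_seg_eq {Z : Cantor} {x : BStr} : Z ∈ cyl x ↔ seg Z x.length = x := by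
  simp [cyl, seg, List.ext_get_iff, Fin.forall_iff]

theorem measurableSet_cyl (x : BStr) : MeasurableSet (cyl x) := by
  simp only [cyl, Set.ofPred_forall]
  exact .iInter fun i => measurableSet_eq_fun (measurable_pi_apply _) measurable_const

theorem sum_measure_cyl_ofFn_le (μ : Measure Cantor) (n : ℕ) :
    ∑ v : Fin n → Bool, μ (cyl (List.ofFn v)) ≤ μ Set.univ := by
  have hdisj : Pairwise (Function.onFun Disjoint fun v : Fin n → Bool => cyl (List.ofFn v)) := by
    refine fun v w hvw => Set.disjoint_left.2 fun Z hv hw => hvw ?_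
    rw [mem_cyl_iff_seg_eq, List.length_ofFn] at hv hw
    exact List.ofFn_injective (hv.symm.trans hw)
  calc ∑ v : Fin n → Bool, μ (cyl (List.ofFn v))
      = μ (⋃ v : Fin n → Bool, cyl (List.ofFn v)) := by
        rw [measure_iUnion hdisj fun v => measurableSet_cyl _, tsum_fintype]
    _ ≤ μ Set.univ := measure_mono (Set.subset_univ _)

theorem avgCpx_le_of_forall (U : BStr →. BStr) (μ : Measure Cantor) [IsProbabilityMeasure μ]
    {n : ℕ} {B : ℝ} (hB : 0 ≤ B)
    (h : ∀ v : Fin n → Bool, μ (cyl (List.ofFn v)) ≠ 0 →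
      (cpx U (List.ofFn v) : ℝ) ≤ B) :
    avgCpx U μ n ≤ B := by
  have hsum : ∑ v : Fin n → Bool, (μ (cyl (List.ofFn v))).toReal ≤ 1 := by
    rw [← ENNReal.toReal_sum fun v _ => measure_ne_top μ _]
    exact ENNReal.toReal_le_of_le_ofReal zero_le_one
      (by simpa using sum_measure_cyl_ofFn_le μ n)
  calc avgCpx U μ n ≤ ∑ v : Fin n → Bool, B * (μ (cyl (List.ofFn v))).toReal := by
        refine Finset.sum_le_sum fun v _ => ?_
        by_cases hv : μ (cyl (List.ofFn v)) = 0
        · simp [hv]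
        · exact mul_le_mul_of_nonneg_right (h v hv) ENNReal.toReal_nonneg
    _ ≤ B := by rw [← Finset.mul_sum]; exact mul_le_of_le_one_right hB hsum

end Cylinders

section Spread

open Classical in
noncomputable def spread (P : ℕ → ℕ) (ω : ℕ → Bool) : Cantor := fun t =>
  if h : ∃ j, P j = t then ω h.choose else false

noncomputable def coin : Measure Bool := (PMF.uniformOfFintype Bool).toMeasure

noncomputable def spreadMeasure (P : ℕ → ℕ) : Measure Cantor :=
  (Measure.infinitePi fun _ : ℕ => coin).map (spread P)

variable {P : ℕ → ℕ}

theorem spread_apply_self (hP : P.Injective) (ω : ℕ → Bool) (j : ℕ) :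
    spread P ω (P j) = ω j := by
  have h : ∃ j', P j' = P j := ⟨j, rfl⟩
  rw [spread, dif_pos h, hP h.choose_spec]

theorem spread_apply_of_forall_ne {t : ℕ} (ht : ∀ j, P j ≠ t) (ω : ℕ → Bool) :
    spread P ω t = false := by
  rw [spread, dif_neg (not_exists.2 ht)]

theorem measurable_spread (P : ℕ → ℕ) : Measurable (spread P) := by
  refine measurable_pi_lambda _ fun t => ?_
  unfold spread
  split_ifs
  exacts [measurable_pi_apply _, measurable_const]

instance : IsProbabilityMeasure coin := by unfold coin; infer_instance

theorem coin_singleton (b : Bool) : coin {b} = 2⁻¹ := by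
  rw [coin, PMF.toMeasure_apply_singleton _ _ (measurableSet_singleton b),
    PMF.uniformOfFintype_apply]
  simp

instance (P : ℕ → ℕ) : IsProbabilityMeasure (spreadMeasure P) :=
  Measure.isProbabilityMeasure_map (measurable_spread P).aemeasurable

theorem spreadMeasure_cyl_le (hP : P.Injective) {x : BStr} {h : ℕ}
    (hx : ∀ j < h, P j < x.length) : spreadMeasure P (cyl x) ≤ 2⁻¹ ^ h := by
  have hsub : spread P ⁻¹' cyl x ⊆
      Set.pi (Finset.range h : Set ℕ) fun j => {x.getD (P j) false} := by
    intro ω hω j hj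
    have hj := hx j (by simpa using hj)
    have := hω ⟨P j, hj⟩
    simp_all [spread_apply_self hP]
  rw [spreadMeasure, Measure.map_apply (measurable_spread P) (measurableSet_cyl x)]
  calc _ ≤ _ := measure_mono hsub
    _ = 2⁻¹ ^ h := by
      rw [Measure.infinitePi_pi _ fun j _ => measurableSet_singleton _]
      simp [coin_singleton]

theorem spreadMeasure_singleton (hP : StrictMono P) (Z : Cantor) : spreadMeasure P {Z} = 0 := by
  by_contra h0
  obtain ⟨k, hk⟩ := ENNReal.exists_inv_two_pow_lt h0
  have hZ : {Z} ⊆ cyl (seg Z (P k)) := by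
    simp [mem_cyl_iff_seg_eq, length_seg]
  have hle := (measure_mono (μ := spreadMeasure P) hZ).trans
    (spreadMeasure_cyl_le hP.injective fun j hj => by rw [length_seg]; exact hP hj)
  exact (hle.trans_lt hk).false

theorem exists_eq_seg_spread (P : ℕ → ℕ) {x : BStr} (hx : spreadMeasure P (cyl x) ≠ 0) :
    ∃ ω, seg (spread P ω) x.length = x := by
  rw [spreadMeasure, Measure.map_apply (measurable_spread P) (measurableSet_cyl x)] at hx
  obtain ⟨ω, hω⟩ := nonempty_of_measure_ne_zero hx
  exact ⟨ω, mem_cyl_iff_seg_eq.1 hω⟩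

theorem avgCpx_spreadMeasure_le {U : BStr →. BStr} {n : ℕ} {B : ℝ} (hB : 0 ≤ B)
    (h : ∀ ω, (cpx U (seg (spread P ω) n) : ℝ) ≤ B) :
    avgCpx U (spreadMeasure P) n ≤ B := by
  refine avgCpx_le_of_forall U _ hB fun v hv => ?_
  obtain ⟨ω, hω⟩ := exists_eq_seg_spread P hv
  rw [List.length_ofFn] at hω
  rw [← hω]
  exact h ω

end Spread

section Machines

def header (p : BStr) : ℕ := p.idxOf false

def dataBits (p : BStr) : BStr := (p.drop (header p + 1)).take (header p)

def program (p : BStr) : BStr := p.drop (2 * header p + 1)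

def pack (w q : BStr) : BStr := List.replicate w.length true ++ false :: (w ++ q)

theorem header_pack (w q : BStr) : header (pack w q) = w.length := by
  rw [header, pack, List.idxOf_append_of_notMem (by simp)]
  simp

theorem dataBits_pack (w q : BStr) : dataBits (pack w q) = w := by
  rw [dataBits, header_pack, pack, List.drop_append]
  simp

theorem program_pack (w q : BStr) : program (pack w q) = q := by
  have hsplit : pack w q = (List.replicate w.length true ++ false :: w) ++ q := by simp [pack]
  rw [program, header_pack, hsplit, List.drop_left' (by simp; omega)]

theorem length_pack (w q : BStr) : (pack w q).length = 2 * w.length + 1 + q.length := by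
  simp [pack]; omega

theorem header_append {p : BStr} (hp : header p < p.length) (t : BStr) :
    header (p ++ t) = header p :=
  List.idxOf_append_of_mem (List.idxOf_lt_length_iff.1 hp)

/-- The guard makes the domain prefix-free whenever the domain of `V` is. -/
def decoderMachine (D : BStr → ℕ → BStr) (V : BStr →. BStr) : BStr →. BStr := fun p =>
  if 2 * header p + 1 ≤ p.length then (V (program p)).map fun y => D (dataBits p) y.length
  else Part.none

variable {D : BStr → ℕ → BStr} {V : BStr →. BStr}

theorem decoderMachine_partrec (hD : Computable₂ D) (hV : Partrec V) :
    Partrec (decoderMachine D V) := by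
  have hheader : Primrec header := Primrec.list_idxOf.comp (.const false) .id
  have hskip : Primrec fun p => 2 * header p + 1 :=
    Primrec.succ.comp (Primrec.nat_mul.comp (.const 2) hheader)
  have hguard : Computable fun p : BStr => decide (2 * header p + 1 ≤ p.length) :=
    (Primrec.nat_le.decide.comp hskip .list_length).to_comp
  have hprogram : Computable program := (Primrec.list_drop.comp hskip .id).to_comp
  have hdata : Computable dataBits :=
    (Primrec.list_take.comp hheader
      (Primrec.list_drop.comp (Primrec.succ.comp hheader) .id)).to_comp
  have hdecode : Computable₂ fun (p y : BStr) => D (dataBits p) y.length :=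
    hD.comp (hdata.comp .fst) (Computable.list_length.comp .snd)
  refine (Partrec.cond hguard ((hV.comp hprogram).map hdecode) Partrec.none).of_eq fun p => ?_
  by_cases h : 2 * header p + 1 ≤ p.length <;> simp [decoderMachine, h]

theorem mem_decoderMachine_pack {w q y : BStr} (hy : y ∈ V q) :
    D w y.length ∈ decoderMachine D V (pack w q) := by
  rw [decoderMachine, if_pos (by simp [header_pack, length_pack]), dataBits_pack, program_pack]
  exact Part.mem_map _ hy

theorem decoderMachine_prefixFree (hV : PrefixFreeDom V) :
    PrefixFreeDom (decoderMachine D V) := by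
  have dom_guard {p : BStr} (hp : (decoderMachine D V p).Dom) :
      2 * header p + 1 ≤ p.length ∧ (V (program p)).Dom := by
    unfold decoderMachine at hp
    split_ifs at hp with h
    exacts [⟨h, hp⟩, hp.elim]
  rintro p _ hp hpt ⟨t, rfl⟩
  obtain ⟨hlen, hdom⟩ := dom_guard hp
  obtain ⟨-, hdom'⟩ := dom_guard hpt
  have hprogram : program (p ++ t) = program p ++ t := by
    rw [program, program, header_append (by omega), List.drop_append_of_le_length hlen]
  rw [hprogram] at hdom'
  rw [List.self_eq_append_right.1 (hV _ _ hdom hdom' (List.prefix_append _ _)), List.append_nil]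

end Machines

section Complexity

variable {U : BStr →. BStr}

theorem cpx_le_length {x q : BStr} (hq : x ∈ U q) : cpx U x ≤ q.length :=
  Nat.sInf_le ⟨q, rfl, hq⟩

theorem exists_length_eq_cpx {x : BStr} (hx : ∃ q, x ∈ U q) :
    ∃ q : BStr, q.length = cpx U x ∧ x ∈ U q := by
  obtain ⟨q, hq⟩ := hx
  exact Nat.sInf_mem (s := {n | ∃ q : BStr, q.length = n ∧ x ∈ U q}) ⟨_, q, rfl, hq⟩

theorem UniversalPlain.exists_mem (hU : UniversalPlain U) (x : BStr) : ∃ q, x ∈ U q := by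
  obtain ⟨c, hc⟩ := hU.2 _ Computable.id.partrec
  obtain ⟨q, -, hq⟩ := hc x x (Part.mem_some x)
  exact ⟨q, hq⟩

/-- With `decoderMachine (fun w _ => w)` it gives a prefix-free machine printing every string. -/
def emptyProgramMachine : BStr →. BStr := fun q => if q = [] then Part.some [] else Part.none

theorem emptyProgramMachine_partrec : Partrec emptyProgramMachine := by
  refine (Partrec.cond (Primrec.eq.decide.comp .id (.const [])).to_comp
    (Computable.const []).partrec Partrec.none).of_eq fun q => ?_
  by_cases h : q = [] <;> simp [emptyProgramMachine, h]

theorem emptyProgramMachine_prefixFree : PrefixFreeDom emptyProgramMachine := by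
  have hdom (q : BStr) : (emptyProgramMachine q).Dom → q = [] := by
    by_cases h : q = [] <;> simp [emptyProgramMachine, h]
  exact fun p q hp hq _ => (hdom p hp).trans (hdom q hq).symm

theorem UniversalPrefixFree.exists_mem (hU : UniversalPrefixFree U) (x : BStr) :
    ∃ q, x ∈ U q := by
  obtain ⟨c, hc⟩ := hU.2.2 _ (decoderMachine_partrec (D := fun w _ => w) Computable.fst
    emptyProgramMachine_partrec) (decoderMachine_prefixFree emptyProgramMachine_prefixFree)
  obtain ⟨q, -, hq⟩ := hc _ _ (mem_decoderMachine_pack (w := x) (q := []) (y := [])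
    (by simp [emptyProgramMachine]))
  exact ⟨q, hq⟩

end Complexity

namespace Settling

variable (f : ℕ → ℕ) (g : ℕ → ℕ → ℕ)

noncomputable def reach (j : ℕ) : ℕ := sInf {p | 2 * (j + 1) ≤ f p}

/-- The least `p ≤ s` with `2 * (j + 1) ≤ g p s`, or `s + 1` if there is none. -/
def reachAt (j s : ℕ) : ℕ := (List.range (s + 1)).findIdx fun p => 2 * (j + 1) ≤ g p s

noncomputable def settle (j : ℕ) : ℕ := sInf {s | reachAt g j s = reach f j}

def settleAt (n j : ℕ) : ℕ :=
  (List.range (n + 1)).findIdx fun s => reachAt g j s = reachAt g j n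

noncomputable def pos (j : ℕ) : ℕ := j + 1 + ((List.range (j + 1)).map (settle f g)).sum

def posAt (n j : ℕ) : ℕ := j + 1 + ((List.range (j + 1)).map (settleAt g n)).sum

/-- Bit `t` is `w[j]` if `t` is the `j`-th position guessed at stage `n`, and `false` otherwise
(`idxOf` then returns `w.length`). -/
def decode (w : BStr) (n : ℕ) : BStr :=
  (List.range n).map fun t => w.getD (((List.range w.length).map (posAt g n)).idxOf t) false

theorem pos_strictMono : StrictMono (pos f g) :=
  strictMono_nat_of_lt_succ fun j => by simp only [pos, List.sum_range_succ]; omega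

theorem settle_lt_pos (j : ℕ) : settle f g j < pos f g j := by
  have := List.le_sum_of_mem
    (List.mem_map_of_mem (f := settle f g) (List.self_mem_range_succ (n := j)))
  simp only [pos]
  omega

theorem posAt_eq_pos {n j : ℕ} (h : ∀ i ≤ j, settleAt g n i = settle f g i) :
    posAt g n j = pos f g j := by
  simp only [posAt, pos]
  congr 2
  exact List.map_congr_left fun i hi => h i (Nat.lt_succ_iff.1 (List.mem_range.1 hi))

section Computability

variable {g} (hg : Computable₂ g)
include hg

theorem reachAt_computable : Computable₂ (reachAt g) := by
  have hq : Computable₂ fun (x : ℕ × ℕ) p => decide (2 * (x.1 + 1) ≤ g p x.2) :=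
    Primrec.nat_le.decide.to_comp.comp
      (Primrec.nat_mul.comp (.const 2) (Primrec.succ.comp (Primrec.fst.comp .fst))).to_comp
      (hg.comp .snd (Computable.snd.comp .fst))
  exact (Computable.list_findIdx_range hq).comp .id (Computable.succ.comp .snd)

theorem settleAt_computable : Computable₂ (settleAt g) := by
  have hq : Computable₂ fun (x : ℕ × ℕ) s => decide (reachAt g x.2 s = reachAt g x.2 x.1) :=
    Primrec.eq.decide.to_comp.comp
      ((reachAt_computable hg).comp (Computable.snd.comp .fst) .snd)
      ((reachAt_computable hg).comp (Computable.snd.comp .fst) (Computable.fst.comp .fst))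
  exact (Computable.list_findIdx_range hq).comp .id (Computable.succ.comp .fst)

theorem posAt_computable : Computable₂ (posAt g) :=
  Primrec.nat_add.to_comp.comp (Computable.succ.comp .snd) <|
    Primrec.list_sum_nat.to_comp.comp <|
      (Computable.list_map_range (settleAt_computable hg)).comp .fst (Computable.succ.comp .snd)

theorem decode_computable : Computable₂ (decode g) := by
  have hpositions : Computable fun x : BStr × ℕ => (List.range x.1.length).map (posAt g x.2) :=
    (Computable.list_map_range (posAt_computable hg)).comp .snd
      (Computable.list_length.comp .fst)
  have hbit : Computable₂ fun (x : BStr × ℕ) t =>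
      x.1.getD (((List.range x.1.length).map (posAt g x.2)).idxOf t) false :=
    (Primrec.list_getD false).to_comp.comp (Computable.fst.comp .fst)
      (Primrec.list_idxOf.to_comp.comp .snd (hpositions.comp .fst))
  exact (Computable.list_map_range hbit).comp .id .snd

end Computability

section Approximation

variable {f g}
variable (hmono : Monotone f) (hunb : ∀ b : ℕ, ∃ n, b < f n)
  (hanti : ∀ n s, g n (s + 1) ≤ g n s) (hlim : ∀ n, ∃ s₀, ∀ s ≥ s₀, g n s = f n)

include hanti hlim in
theorem f_le_g (p s : ℕ) : f p ≤ g p s := by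
  obtain ⟨s₀, hs₀⟩ := hlim p
  rw [← hs₀ (max s s₀) (le_max_right _ _)]
  exact antitone_nat_of_succ_le (hanti p) (le_max_left _ _)

include hunb in
theorem le_f_reach (j : ℕ) : 2 * (j + 1) ≤ f (reach f j) := by
  obtain ⟨n, hn⟩ := hunb (2 * (j + 1))
  exact Nat.sInf_mem (s := {p | 2 * (j + 1) ≤ f p}) ⟨n, hn.le⟩

theorem f_lt_of_lt_reach {j p : ℕ} (hp : p < reach f j) : f p < 2 * (j + 1) := by
  simpa using Nat.notMem_of_lt_sInf hp

theorem lt_of_lt_reachAt {j s p : ℕ} (hp : p < reachAt g j s) : g p s < 2 * (j + 1) := by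
  simpa using List.eq_false_of_lt_findIdx_range hp

include hunb hanti hlim in
theorem reachAt_eq_reach {j s : ℕ} (hs : reach f j ≤ s)
    (h : ∀ p < reach f j, g p s < 2 * (j + 1)) : reachAt g j s = reach f j := by
  refine List.findIdx_range_eq (by omega) ?_ fun p hp => by simpa using h p hp
  simpa using (le_f_reach hunb j).trans (f_le_g hanti hlim _ s)

include hunb hanti hlim in
theorem exists_reachAt_eq_reach (j : ℕ) : ∃ s, reachAt g j s = reach f j := by
  have hstab :
      ∀ᶠ s in atTop, reach f j ≤ s ∧ ∀ p ∈ Finset.range (reach f j), g p s = f p :=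
    (eventually_ge_atTop _).and <| (Finset.eventually_all _).2 fun p _ =>
      eventually_atTop.2 (hlim p)
  obtain ⟨s, hs, hgf⟩ := hstab.exists
  refine ⟨s, reachAt_eq_reach hunb hanti hlim hs fun p hp => ?_⟩
  rw [hgf p (Finset.mem_range.2 hp)]
  exact f_lt_of_lt_reach hp

include hunb hanti hlim in
theorem reachAt_eq_reach_of_le {j s s' : ℕ} (h : reachAt g j s = reach f j) (hss' : s ≤ s') :
    reachAt g j s' = reach f j := by
  by_cases hs' : reach f j ≤ s'
  · refine reachAt_eq_reach hunb hanti hlim hs' fun p hp => ?_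
    exact (antitone_nat_of_succ_le (hanti p) hss').trans_lt (lt_of_lt_reachAt (h ▸ hp))
  · have : reachAt g j s ≤ s + 1 := List.findIdx_le_length.trans_eq List.length_range
    rwa [show s' = s by omega]

include hunb hanti hlim in
theorem reachAt_settle (j : ℕ) : reachAt g j (settle f g j) = reach f j :=
  Nat.sInf_mem (exists_reachAt_eq_reach hunb hanti hlim j)

include hunb hanti hlim in
theorem settleAt_eq_settle {n j : ℕ} (hn : settle f g j ≤ n) :
    settleAt g n j = settle f g j := by
  have hreach := reachAt_eq_reach_of_le hunb hanti hlim (reachAt_settle hunb hanti hlim j) hn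
  refine List.findIdx_range_eq (by omega) ?_ fun s hs => ?_
  · simp [hreach, reachAt_settle hunb hanti hlim]
  · simpa [hreach] using Nat.notMem_of_lt_sInf hs

include hunb hanti hlim in
theorem reach_le_pos (j : ℕ) : reach f j ≤ pos f g j := by
  have : reachAt g j (settle f g j) ≤ settle f g j + 1 :=
    List.findIdx_le_length.trans_eq List.length_range
  have := settle_lt_pos f g j
  rw [reachAt_settle hunb hanti hlim] at *
  omega

include hmono hunb hanti hlim in
theorem two_mul_numBelow_pos_le (n : ℕ) : 2 * numBelow (pos f g) n ≤ f n := by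
  obtain h | ⟨j, hj⟩ : numBelow (pos f g) n = 0 ∨ ∃ j, numBelow (pos f g) n = j + 1 := by
    cases numBelow (pos f g) n <;> simp
  · simp [h]
  have hpos : pos f g j < n := (lt_numBelow_iff (pos_strictMono f g)).1 (by omega)
  calc 2 * numBelow (pos f g) n = 2 * (j + 1) := by rw [hj]
    _ ≤ f (reach f j) := le_f_reach hunb j
    _ ≤ f n := hmono ((reach_le_pos hunb hanti hlim j).trans hpos.le)

include hunb hanti hlim in
theorem posAt_eq_pos_of_lt_numBelow {n j : ℕ} (hj : j < numBelow (pos f g) n) :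
    posAt g n j = pos f g j := by
  have hmono := pos_strictMono f g
  refine posAt_eq_pos f g fun i hi => settleAt_eq_settle hunb hanti hlim ?_
  have := (lt_numBelow_iff hmono).1 hj
  have := hmono.monotone hi
  have := settle_lt_pos f g i
  omega

include hunb hanti hlim in
theorem decode_eq_seg_spread (ω : ℕ → Bool) (n : ℕ) :
    decode g ((List.range (numBelow (pos f g) n)).map ω) n = seg (spread (pos f g) ω) n := by
  have hinj := (pos_strictMono f g).injective
  have hpositions : (List.range (numBelow (pos f g) n)).map (posAt g n) =
      (List.range (numBelow (pos f g) n)).map (pos f g) :=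
    List.map_congr_left fun j hj =>
      posAt_eq_pos_of_lt_numBelow hunb hanti hlim (List.mem_range.1 hj)
  simp only [decode, List.length_map, List.length_range, hpositions]
  refine List.ext_getElem (by simp [length_seg]) fun t ht _ => ?_
  simp only [List.getElem_map, List.getElem_range, seg, List.getElem_ofFn]
  by_cases hex : ∃ j, pos f g j = t
  · obtain ⟨j, rfl⟩ := hex
    have hj : j < numBelow (pos f g) n :=
      (lt_numBelow_iff (pos_strictMono f g)).2 (by simpa using ht)
    rw [List.idxOf_map_range_of_injective hinj hj, spread_apply_self hinj,
      List.getD_eq_getElem _ _ (by simpa using hj)]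
    simp
  · rw [not_exists] at hex
    rw [spread_apply_of_forall_ne hex, List.getD_eq_default]
    rw [List.idxOf_eq_length (by simpa using fun j _ => hex j)]
    simp

include hmono hunb hanti hlim in
theorem cpx_seg_spread_le {U : BStr →. BStr}
    (hU : ∃ c, ∀ p x, x ∈ decoderMachine (decode g) U p →
      ∃ q : BStr, q.length ≤ p.length + c ∧ x ∈ U q)
    (hdesc : ∀ x, ∃ q, x ∈ U q) :
    ∃ c : ℕ, ∀ n ω, cpx U (seg (spread (pos f g) ω) n) ≤ cpxN U n + f n + c := by
  obtain ⟨c, hc⟩ := hU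
  refine ⟨c + 1, fun n ω => ?_⟩
  set w := (List.range (numBelow (pos f g) n)).map ω
  obtain ⟨q₀, hq₀, hnum⟩ := exists_length_eq_cpx (hdesc (numStr n))
  have hdecode := mem_decoderMachine_pack (D := decode g) (w := w) hnum
  rw [numStr, List.length_replicate, decode_eq_seg_spread hunb hanti hlim] at hdecode
  obtain ⟨q, hq, hmem⟩ := hc _ _ hdecode
  have := cpx_le_length hmem
  have := two_mul_numBelow_pos_le hmono hunb hanti hlim n
  rw [length_pack] at hq
  simp only [w, List.length_map, List.length_range] at hq
  rw [cpxN]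
  omega

end Approximation

end Settling

/-- for every nondecreasing unbounded `f : ℕ → ℕ` that is
recursively approximable from above, there is a nonatomic measure `μ` with
`C(μ↾n) ≤⁺ C(n) + f(n)` and `K(μ↾n) ≤⁺ K(n) + f(n)`. -/
theorem nonatomic_measure_with_near_trivial_complexity
    (U UK : BStr →. BStr) (hU : UniversalPlain U) (hUK : UniversalPrefixFree UK)
    (f : ℕ → ℕ) (hmono : Monotone f) (hunb : ∀ b : ℕ, ∃ n, b < f n)
    (g : ℕ → ℕ → ℕ) (hg : Computable₂ g)
    (hanti : ∀ n s, g n (s + 1) ≤ g n s)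
    (hlim : ∀ n, ∃ s₀, ∀ s ≥ s₀, g n s = f n) :
    ∃ μ : Measure Cantor, IsProbabilityMeasure μ ∧
      (∀ Z : Cantor, μ {Z} = 0) ∧
      (∃ c : ℝ, ∀ n : ℕ, avgCpx U μ n ≤ (cpxN U n : ℝ) + (f n : ℝ) + c) ∧
      (∃ c : ℝ, ∀ n : ℕ, avgCpx UK μ n ≤ (cpxN UK n : ℝ) + (f n : ℝ) + c) := by
  set P := Settling.pos f g
  have avgCpx_le {V : BStr →. BStr}
      (hV : ∃ c : ℕ, ∀ n ω, cpx V (seg (spread P ω) n) ≤ cpxN V n + f n + c) :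
      ∃ c : ℝ, ∀ n, avgCpx V (spreadMeasure P) n ≤ cpxN V n + f n + c := by
    obtain ⟨c, hc⟩ := hV
    exact ⟨c, fun n =>
      avgCpx_spreadMeasure_le (by positivity) fun ω => by exact_mod_cast hc n ω⟩
  have hdecode := Settling.decode_computable hg
  refine ⟨spreadMeasure P, inferInstance, spreadMeasure_singleton (Settling.pos_strictMono f g),
    avgCpx_le ?_, avgCpx_le ?_⟩
  · exact Settling.cpx_seg_spread_le hmono hunb hanti hlim
      (hU.2 _ (decoderMachine_partrec hdecode hU.1)) hU.exists_mem
  · exact Settling.cpx_seg_spread_le hmono hunb hanti hlim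
      (hUK.2.2 _ (decoderMachine_partrec hdecode hUK.1) (decoderMachine_prefixFree hUK.2.1))
      hUK.exists_mem
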